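/- arXiv:2509.01694 — 6 statements merged into one kernel-verified Lean document; each statement's English description precedes it below -/
import Mathlib

section
/- Let A be a finite nonempty index set, θ : A → [0,1], and let (y_a)_{a∈A} be independent Bernoulli random variables with P(y_a = 1) = θ_a. Let n be a positive integer with |A| ≤ n, let γ ∈ ℝ, and let Γ > 0 with ⌊Γ⌋ + 1 ≤ |A|. If n·γ ≤ Σ_{a∈A} θ_a − B(Γ, θ), then P(Σ_{a∈A} y_a > n·γ) ≥ 1 − exp(−Γ²/(2n)). In particular, for q ∈ [0,1), if Γ = sqrt(2·n·log(1/(1−q))) satisfies ⌊Γ⌋ + 1 ≤ |A| and the above linearized constraint holds, then P(Σ_{a∈A} y_a > n·γ) ≥ q. -/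
/-! Every `p̂_a` is at least `1/2`, so the protection term is at least `Γ/2` and the linearized
constraint puts `nγ` at least `Γ/2` below the mean `Σ θ_a` of `Σ y_a`. Hoeffding's inequality for
the independent `[0,1]`-valued `y_a` bounds the probability of such a deviation by
`exp(-2(Γ/2)²/|A|) ≤ exp(-Γ²/(2n))`, and for `Γ = sqrt(2n log(1/(1-q)))` this bound is `1 - q`. -/

open Finset MeasureTheory

/-- For `θ : A → [0,1]`, `p̂_a = max{θ_a, 1 − θ_a}`. -/
noncomputable def phat {ι : Type*} (θ : ι → ℝ) (a : ι) : ℝ :=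
  max (θ a) (1 - θ a)

/-- Protection term `B(Γ, θ)`: the maximum over pairs `(S₀, a₀)` with
`S₀ ⊆ A`, `|S₀| = ⌊Γ⌋`, `a₀ ∈ A \ S₀`, of
`Σ_{a∈S₀} p̂_a + (Γ − ⌊Γ⌋)·p̂_{a₀}`. -/
noncomputable def protB {ι : Type*} [Fintype ι] (Γ : ℝ) (θ : ι → ℝ) : ℝ :=
  sSup {x : ℝ | ∃ (S : Finset ι) (a₀ : ι), S.card = Nat.floor Γ ∧ a₀ ∉ S ∧
    x = (∑ a ∈ S, phat θ a) + (Γ - (Nat.floor Γ : ℝ)) * phat θ a₀}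

open ProbabilityTheory

lemma half_le_phat {ι : Type*} (θ : ι → ℝ) (a : ι) : 1 / 2 ≤ phat θ a := by
  unfold phat
  rcases le_total (θ a) (1 / 2) with h | h
  · exact le_max_of_le_right (by linarith)
  · exact le_max_of_le_left h

lemma half_le_protB {ι : Type*} [Fintype ι] {Γ : ℝ} (θ : ι → ℝ) (hΓ : 0 ≤ Γ)
    (hfloor : ⌊Γ⌋₊ + 1 ≤ Fintype.card ι) : Γ / 2 ≤ protB Γ θ := by
  classical
  set f : Finset ι × ι → ℝ := fun p => (∑ a ∈ p.1, phat θ a) + (Γ - ⌊Γ⌋₊) * phat θ p.2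
  have hsub : {x : ℝ | ∃ (S : Finset ι) (a₀ : ι), S.card = ⌊Γ⌋₊ ∧ a₀ ∉ S ∧
      x = (∑ a ∈ S, phat θ a) + (Γ - ⌊Γ⌋₊) * phat θ a₀} ⊆ Set.range f := by
    rintro x ⟨S, a₀, -, -, rfl⟩
    exact ⟨(S, a₀), rfl⟩
  obtain ⟨S, -, hS⟩ := Finset.exists_subset_card_eq (s := (Finset.univ : Finset ι)) (n := ⌊Γ⌋₊)
    (by rw [Finset.card_univ]; omega)
  obtain ⟨a₀, ha₀⟩ : (Finset.univ \ S).Nonempty := by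
    rw [← Finset.card_pos, Finset.card_sdiff_of_subset S.subset_univ, Finset.card_univ, hS]
    omega
  refine le_csSup_of_le ((Set.finite_range f).subset hsub).bddAbove
    ⟨S, a₀, hS, (Finset.mem_sdiff.mp ha₀).2, rfl⟩ ?_
  have hsum : (⌊Γ⌋₊ : ℝ) * (1 / 2) ≤ ∑ a ∈ S, phat θ a := by
    simpa [hS] using Finset.card_nsmul_le_sum S (phat θ) (1 / 2) fun a _ => half_le_phat θ a
  have hfrac : (Γ - ⌊Γ⌋₊) * (1 / 2) ≤ (Γ - ⌊Γ⌋₊) * phat θ a₀ :=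
    mul_le_mul_of_nonneg_left (half_le_phat θ a₀) (by linarith [Nat.floor_le hΓ])
  linarith

lemma integral_eq_measureReal_of_forall_eq_zero_or_one {Ω : Type*} [MeasurableSpace Ω]
    {μ : Measure Ω} {X : Ω → ℝ} (hX : Measurable X) (h01 : ∀ ω, X ω = 0 ∨ X ω = 1) :
    μ[X] = μ.real {ω | X ω = 1} := by
  calc μ[X] = ∫ ω, (X ⁻¹' {1}).indicator 1 ω ∂μ := by
        congr 1
        funext ω
        rcases h01 ω with h | h <;> simp [h]
    _ = μ.real {ω | X ω = 1} := integral_indicator_one (hX (measurableSet_singleton 1))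

lemma measureReal_sum_le_sum_integral_sub_le {Ω ι : Type*} [MeasurableSpace Ω] [Fintype ι]
    {μ : Measure Ω} [IsProbabilityMeasure μ] {X : ι → Ω → ℝ} (hindep : iIndepFun X μ)
    (hmeas : ∀ i, Measurable (X i)) (hX : ∀ i ω, X i ω ∈ Set.Icc (0 : ℝ) 1) {ε : ℝ}
    (hε : 0 ≤ ε) :
    μ.real {ω | ∑ i, X i ω ≤ ∑ i, μ[X i] - ε} ≤
      Real.exp (-2 * ε ^ 2 / Fintype.card ι) := by
  have hsubG : ∀ i ∈ (Finset.univ : Finset ι),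
      HasSubgaussianMGF (fun ω => -(X i ω - μ[X i])) (1 / 4) μ := by
    intro i _
    have := (hasSubgaussianMGF_of_mem_Icc (hmeas i).aemeasurable
      (ae_of_all μ (hX i))).neg
    convert this using 1
    · rfl
    · rw [sub_zero, nnnorm_one]
      norm_num
  have hindep' : iIndepFun (fun i ω => -(X i ω - μ[X i])) μ :=
    hindep.comp (fun i (t : ℝ) => -(t - ∫ ω, X i ω ∂μ)) fun i => by fun_prop
  have := HasSubgaussianMGF.measure_sum_ge_le_of_iIndepFun hindep' hsubG hε
  convert this using 2
  · ext ω
    simp only [Set.mem_ofPred_eq, Finset.sum_neg_distrib, Finset.sum_sub_distrib]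
    constructor <;> intro h <;> linarith
  · simp only [Finset.sum_const, Finset.card_univ, nsmul_eq_mul]
    push_cast
    ring

lemma ofReal_one_sub_le_measure_compl {Ω : Type*} [MeasurableSpace Ω] {μ : Measure Ω}
    [IsProbabilityMeasure μ] {s : Set Ω} (hs : MeasurableSet s) {δ : ℝ} (h : μ.real s ≤ δ) :
    ENNReal.ofReal (1 - δ) ≤ μ sᶜ := by
  rw [← ofReal_measureReal, probReal_compl_eq_one_sub hs]
  gcongr

lemma exp_neg_sq_sqrt_mul_log_div {m q : ℝ} (hm : 0 < m) (hq0 : 0 ≤ q) (hq1 : q < 1) :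
    Real.exp (-Real.sqrt (m * Real.log (1 / (1 - q))) ^ 2 / m) = 1 - q := by
  have hlog : 0 ≤ Real.log (1 / (1 - q)) :=
    Real.log_nonneg (by rw [le_div_iff₀ (by linarith)]; linarith)
  rw [Real.sq_sqrt (mul_nonneg hm.le hlog), one_div, Real.log_inv,
    show -(m * -Real.log (1 - q)) / m = Real.log (1 - q) by field_simp,
    Real.exp_log (by linarith)]

theorem stmt0_general {Ω ι : Type*} [MeasurableSpace Ω] [Fintype ι]
    (P : Measure Ω) [IsProbabilityMeasure P]
    (θ : ι → ℝ) (hθ : ∀ a, θ a ∈ Set.Icc (0 : ℝ) 1)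
    (y : ι → Ω → ℝ) (hmeas : ∀ a, Measurable (y a))
    (h01 : ∀ a ω, y a ω = 0 ∨ y a ω = 1)
    (hdist : ∀ a, P {ω | y a ω = 1} = ENNReal.ofReal (θ a))
    (hindep : ProbabilityTheory.iIndepFun y P)
    (n : ℕ) (hcard : Fintype.card ι ≤ n)
    (γ Γ : ℝ) (hΓ : 0 < Γ) (hfloor : Nat.floor Γ + 1 ≤ Fintype.card ι)
    (hcon : (n : ℝ) * γ ≤ (∑ a, θ a) - protB Γ θ) :
    ENNReal.ofReal (1 - Real.exp (-(Γ ^ 2) / (2 * n))) ≤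
        P {ω | (n : ℝ) * γ < ∑ a, y a ω} ∧
      (∀ q : ℝ, 0 ≤ q → q < 1 →
        Γ = Real.sqrt (2 * n * Real.log (1 / (1 - q))) →
        ENNReal.ofReal q ≤ P {ω | (n : ℝ) * γ < ∑ a, y a ω}) := by
  have hcard_pos : (0 : ℝ) < Fintype.card ι := by exact_mod_cast (by omega : 0 < Fintype.card ι)
  have hn : (0 : ℝ) < n := hcard_pos.trans_le (by exact_mod_cast hcard)
  have hmean : ∀ a, P[y a] = θ a := fun a => by
    rw [integral_eq_measureReal_of_forall_eq_zero_or_one (hmeas a) (h01 a), measureReal_def,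
      hdist a, ENNReal.toReal_ofReal (hθ a).1]
  have hy : ∀ a ω, y a ω ∈ Set.Icc (0 : ℝ) 1 := fun a ω => by
    rcases h01 a ω with h | h <;> simp [h]
  have htail : P.real {ω | ∑ a, y a ω ≤ n * γ} ≤ Real.exp (-(Γ ^ 2) / (2 * n)) :=
    calc P.real {ω | ∑ a, y a ω ≤ n * γ}
        ≤ P.real {ω | ∑ a, y a ω ≤ ∑ a, P[y a] - Γ / 2} := by
          refine measureReal_mono (fun ω hω => ?_)
          simp only [Set.mem_ofPred_eq, hmean] at hω ⊢
          linarith [half_le_protB θ hΓ.le hfloor]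
      _ ≤ Real.exp (-2 * (Γ / 2) ^ 2 / Fintype.card ι) :=
          measureReal_sum_le_sum_integral_sub_le hindep hmeas hy (by positivity)
      _ ≤ Real.exp (-(Γ ^ 2) / (2 * n)) := by
          rw [Real.exp_le_exp, show -2 * (Γ / 2) ^ 2 / Fintype.card ι =
            -(Γ ^ 2) / (2 * Fintype.card ι) by ring, neg_div, neg_div, neg_le_neg_iff]
          gcongr
  have hbound := ofReal_one_sub_le_measure_compl
    (measurableSet_le (by fun_prop) measurable_const) htail
  simp only [Set.compl_ofPred, not_le] at hbound
  refine ⟨hbound, fun q hq0 hq1 hΓq => ?_⟩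
  rwa [hΓq, exp_neg_sq_sqrt_mul_log_div (by positivity) hq0 hq1, sub_sub_cancel] at hbound

/-- **Probabilistic guarantee from the linearized constraint** (Theorem 1).
If `(y_a)` are independent Bernoulli with means `θ_a ∈ [0,1]`, `|A| ≤ n`,
`Γ > 0` with `⌊Γ⌋ + 1 ≤ |A|`, and `n·γ ≤ Σ_a θ_a − B(Γ, θ)`, then
`P(Σ_a y_a > n·γ) ≥ 1 − exp(−Γ²/(2n))`; in particular, if
`Γ = sqrt(2·n·log(1/(1−q)))` for `q ∈ [0,1)`, then `P(Σ_a y_a > n·γ) ≥ q`. -/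
theorem stmt0 {Ω ι : Type*} [MeasurableSpace Ω] [Fintype ι] [Nonempty ι]
    (P : Measure Ω) [IsProbabilityMeasure P]
    (θ : ι → ℝ) (hθ : ∀ a, θ a ∈ Set.Icc (0 : ℝ) 1)
    (y : ι → Ω → ℝ) (hmeas : ∀ a, Measurable (y a))
    (h01 : ∀ a ω, y a ω = 0 ∨ y a ω = 1)
    (hdist : ∀ a, P {ω | y a ω = 1} = ENNReal.ofReal (θ a))
    (hindep : ProbabilityTheory.iIndepFun y P)
    (n : ℕ) (hn : 0 < n) (hcard : Fintype.card ι ≤ n)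
    (γ Γ : ℝ) (hΓ : 0 < Γ) (hfloor : Nat.floor Γ + 1 ≤ Fintype.card ι)
    (hcon : (n : ℝ) * γ ≤ (∑ a, θ a) - protB Γ θ) :
    ENNReal.ofReal (1 - Real.exp (-(Γ ^ 2) / (2 * n))) ≤
        P {ω | (n : ℝ) * γ < ∑ a, y a ω} ∧
      (∀ q : ℝ, 0 ≤ q → q < 1 →
        Γ = Real.sqrt (2 * n * Real.log (1 / (1 - q))) →
        ENNReal.ofReal q ≤ P {ω | (n : ℝ) * γ < ∑ a, y a ω}) :=
  stmt0_general P θ hθ y hmeas h01 hdist hindep n hcard γ Γ hΓ hfloor hcon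
end

section
/- Let A be a finite nonempty index set, θ : A → [0,1], c ∈ ℝ, and Γ ≥ 0 with ⌊Γ⌋ + 1 ≤ |A|. Then the constraint c ≤ Σ_{a∈A} θ_a − B(Γ, θ) holds if and only if there exist a real s ≥ 0 and a function v : A → ℝ with v_a ≥ 0, s + v_a ≥ θ_a, and s + v_a ≥ 1 − θ_a for every a ∈ A, such that c ≤ Σ_{a∈A} θ_a − Γ·s − Σ_{a∈A} v_a. -/
open Finset

/-! The protection term is the optimal value of the linear program
`max {∑ p̂_a x_a : 0 ≤ x ≤ 1, ∑ x_a ≤ Γ}`, attained by putting `x = 1` on a set `S` of `⌊Γ⌋`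
largest values of `p̂` and `x = Γ - ⌊Γ⌋` on a largest remaining one, `a₀`. The constraint
system on `(s, v)` is its dual, and weak duality is an elementary estimate. Conversely the
threshold `s = p̂_{a₀}`, `v_a = (p̂_a - s)⁺` is a dual solution whose value equals that of
`(S, a₀)`, because exactly the elements of `S` lie above the threshold. -/

lemma phat_nonneg {ι : Type*} (θ : ι → ℝ) (a : ι) : 0 ≤ phat θ a := by
  have := le_max_left (θ a) (1 - θ a)
  have := le_max_right (θ a) (1 - θ a)
  unfold phat
  linarith

section TopSet

variable {ι : Type*} (p : ι → ℝ)

def IsTopSet (S : Finset ι) : Prop :=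
  ∀ T : Finset ι, #T = #S → ∑ a ∈ T, p a ≤ ∑ a ∈ S, p a

variable {p}

lemma IsTopSet.le_of_mem_of_notMem [DecidableEq ι] {S : Finset ι} (hS : IsTopSet p S)
    {a b : ι} (ha : a ∈ S) (hb : b ∉ S) : p b ≤ p a := by
  have hb' : b ∉ S.erase a := fun h => hb (mem_of_mem_erase h)
  have hswap := hS (insert b (S.erase a)) <| by
    rw [card_insert_of_notMem hb', card_erase_add_one ha]
  rw [sum_insert hb', sum_erase_eq_sub ha] at hswap
  linarith

variable (p)

lemma exists_isTopSet_card_eq [Fintype ι] {k : ℕ} (hk : k ≤ Fintype.card ι) :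
    ∃ S : Finset ι, #S = k ∧ IsTopSet p S := by
  have hne : ((univ : Finset ι).powersetCard k).Nonempty := powersetCard_nonempty.2 (by simpa)
  obtain ⟨S, hSmem, hSmax⟩ := exists_max_image _ (fun S => ∑ a ∈ S, p a) hne
  have hScard := (mem_powersetCard.1 hSmem).2
  exact ⟨S, hScard, fun T hT => hSmax T (mem_powersetCard.2 ⟨subset_univ T, hT.trans hScard⟩)⟩

end TopSet

section Duality

variable {ι : Type*} [Fintype ι] {p v : ι → ℝ} {s γ : ℝ}

lemma sum_max_sub_eq_of_threshold {S : Finset ι} (hS : ∀ a ∈ S, s ≤ p a)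
    (hSc : ∀ a ∉ S, p a ≤ s) : ∑ a, max (p a - s) 0 = ∑ a ∈ S, p a - #S * s := by
  have houtside : ∀ a ∈ univ, a ∉ S → max (p a - s) 0 = 0 := fun a _ ha =>
    max_eq_right (by linarith [hSc a ha])
  rw [← sum_subset (subset_univ S) houtside,
    sum_congr rfl fun a ha => max_eq_left (by linarith [hS a ha]), sum_sub_distrib,
    sum_const, nsmul_eq_mul]

lemma sum_add_mul_le_of_le_add {S : Finset ι} {a₀ : ι} (ha₀ : a₀ ∉ S) (hγ₀ : 0 ≤ γ)
    (hγ₁ : γ ≤ 1) (hv : ∀ a, 0 ≤ v a) (hp : ∀ a, p a ≤ s + v a) :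
    ∑ a ∈ S, p a + γ * p a₀ ≤ (#S + γ) * s + ∑ a, v a := by
  have hS : ∑ a ∈ S, p a ≤ #S * s + ∑ a ∈ S, v a := by
    calc ∑ a ∈ S, p a ≤ ∑ a ∈ S, (s + v a) := sum_le_sum fun a _ => hp a
      _ = #S * s + ∑ a ∈ S, v a := by rw [sum_add_distrib, sum_const, nsmul_eq_mul]
  have ha₀' : γ * p a₀ ≤ γ * s + v a₀ := by
    nlinarith [mul_le_mul_of_nonneg_left (hp a₀) hγ₀, hv a₀]
  have hsub : ∑ a ∈ S, v a + v a₀ ≤ ∑ a, v a := by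
    classical
    rw [add_comm, ← sum_insert ha₀]
    exact sum_le_sum_of_subset_of_nonneg (subset_univ _) fun a _ _ => hv a
  linarith

end Duality

section ProtectionTerm

variable {ι : Type*} [Fintype ι]

/-- The values whose supremum is `protB Γ θ`, with `phat θ` replaced by an arbitrary `p`. -/
def protValues (Γ : ℝ) (p : ι → ℝ) : Set ℝ :=
  {x : ℝ | ∃ (S : Finset ι) (a₀ : ι), S.card = Nat.floor Γ ∧ a₀ ∉ S ∧
    x = (∑ a ∈ S, p a) + (Γ - (Nat.floor Γ : ℝ)) * p a₀}

variable {Γ s : ℝ} {p v : ι → ℝ}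

lemma dual_mem_upperBounds_protValues (hΓ : 0 ≤ Γ) (hv : ∀ a, 0 ≤ v a)
    (hp : ∀ a, p a ≤ s + v a) : Γ * s + ∑ a, v a ∈ upperBounds (protValues Γ p) := by
  rintro x ⟨S, a₀, hcard, ha₀, rfl⟩
  have hfrac₁ : Γ - Nat.floor Γ ≤ 1 := by linarith [Nat.lt_floor_add_one Γ]
  have := sum_add_mul_le_of_le_add ha₀ (sub_nonneg.2 (Nat.floor_le hΓ)) hfrac₁ hv hp
  rwa [hcard, add_sub_cancel] at this

lemma exists_dual_isGreatest_protValues (hp₀ : ∀ a, 0 ≤ p a) (hΓ : 0 ≤ Γ)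
    (hfloor : Nat.floor Γ + 1 ≤ Fintype.card ι) :
    ∃ (s : ℝ) (v : ι → ℝ), 0 ≤ s ∧ (∀ a, 0 ≤ v a ∧ p a ≤ s + v a) ∧
      IsGreatest (protValues Γ p) (Γ * s + ∑ a, v a) := by
  classical
  obtain ⟨S, hScard, hStop⟩ := exists_isTopSet_card_eq p (Nat.le_of_succ_le hfloor)
  have hcompl : (univ \ S).Nonempty := by
    rw [← card_pos, card_sdiff_of_subset (subset_univ S), card_univ]
    omega
  obtain ⟨a₀, ha₀mem, ha₀max⟩ := exists_max_image _ p hcompl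
  have ha₀ : a₀ ∉ S := (mem_sdiff.1 ha₀mem).2
  have hdual : ∀ a, 0 ≤ max (p a - p a₀) 0 ∧ p a ≤ p a₀ + max (p a - p a₀) 0 := fun a =>
    ⟨le_max_right _ _, by linarith [le_max_left (p a - p a₀) 0]⟩
  refine ⟨p a₀, fun a => max (p a - p a₀) 0, hp₀ a₀, hdual, ⟨S, a₀, hScard, ha₀, ?_⟩,
    dual_mem_upperBounds_protValues hΓ (fun a => (hdual a).1) (fun a => (hdual a).2)⟩
  rw [sum_max_sub_eq_of_threshold (fun a ha => hStop.le_of_mem_of_notMem ha ha₀)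
    (fun a ha => ha₀max a (mem_sdiff.2 ⟨mem_univ a, ha⟩)), hScard]
  ring

end ProtectionTerm

theorem stmt1_general {ι : Type*} [Fintype ι] (θ : ι → ℝ)
    (c Γ : ℝ) (hΓ : 0 ≤ Γ)
    (hfloor : Nat.floor Γ + 1 ≤ Fintype.card ι) :
    (c ≤ (∑ a, θ a) - protB Γ θ) ↔
      ∃ (s : ℝ) (v : ι → ℝ), 0 ≤ s ∧
        (∀ a, 0 ≤ v a ∧ θ a ≤ s + v a ∧ 1 - θ a ≤ s + v a) ∧
        c ≤ (∑ a, θ a) - Γ * s - ∑ a, v a := by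
  obtain ⟨s₀, v₀, hs₀, hv₀, hgreatest⟩ :=
    exists_dual_isGreatest_protValues (phat_nonneg θ) hΓ hfloor
  have hB : protB Γ θ = Γ * s₀ + ∑ a, v₀ a := hgreatest.csSup_eq
  rw [hB]
  constructor
  · intro hc
    exact ⟨s₀, v₀, hs₀, fun a => ⟨(hv₀ a).1, max_le_iff.1 (hv₀ a).2⟩, by linarith⟩
  · rintro ⟨s, v, -, hv, hc⟩
    have := dual_mem_upperBounds_protValues hΓ (fun a => (hv a).1)
      (fun a => max_le (hv a).2.1 (hv a).2.2) hgreatest.1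
    linarith

/-- **Duality-based polyhedral reformulation of the linearized QoS constraint**
(Theorem 2 of the paper, for a single client–job pair). The constraint
`c ≤ Σ_a θ_a − B(Γ, θ)` holds iff there exist `s ≥ 0` and `v : A → ℝ≥0` with
`s + v_a ≥ θ_a` and `s + v_a ≥ 1 − θ_a` for all `a`, such that
`c ≤ Σ_a θ_a − Γ·s − Σ_a v_a`. -/
theorem stmt1 {ι : Type*} [Fintype ι] [Nonempty ι] (θ : ι → ℝ)
    (hθ : ∀ a, θ a ∈ Set.Icc (0 : ℝ) 1) (c Γ : ℝ) (hΓ : 0 ≤ Γ)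
    (hfloor : Nat.floor Γ + 1 ≤ Fintype.card ι) :
    (c ≤ (∑ a, θ a) - protB Γ θ) ↔
      ∃ (s : ℝ) (v : ι → ℝ), 0 ≤ s ∧
        (∀ a, 0 ≤ v a ∧ θ a ≤ s + v a ∧ 1 - θ a ≤ s + v a) ∧
        c ≤ (∑ a, θ a) - Γ * s - ∑ a, v a :=
  stmt1_general θ c Γ hΓ hfloor
end

section
/- Let A be a finite nonempty index set, θ : A → [0,1], and Γ ≥ 0 with ⌊Γ⌋ + 1 ≤ |A|. Then B(Γ, θ) equals the optimal value of the linear program: maximize Σ_{a∈A} p̂_a·z_a over all z : A → [0,1] satisfying Σ_{a∈A} z_a ≤ Γ. -/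
/-
The LP is a fractional knapsack with unit weights, so the greedy solution is optimal: put
`z = 1` on a set `S` of `⌊Γ⌋` largest values of `p̂` and the fractional rest `Γ - ⌊Γ⌋` on a
largest value `p̂_{a₀}` outside `S`. Writing `c = p̂_{a₀}`, any feasible `z` has
`Σ p̂_a z_a = Σ (p̂_a - c) z_a + c Σ z_a ≤ Σ_{a ∈ S} (p̂_a - c) + c Γ`, which is the greedy value,
and every pair `(S₀, a₀)` is itself the value of a feasible `z`.
-/

open Finset

namespace ProtectionTerm

variable {ι : Type*} [Fintype ι] (w : ι → ℝ) (Γ : ℝ)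

def pairValues : Set ℝ :=
  {x | ∃ (S : Finset ι) (a₀ : ι), S.card = ⌊Γ⌋₊ ∧ a₀ ∉ S ∧
    x = (∑ a ∈ S, w a) + (Γ - ⌊Γ⌋₊) * w a₀}

def lpValues : Set ℝ :=
  {x | ∃ z : ι → ℝ, (∀ a, z a ∈ Set.Icc (0 : ℝ) 1) ∧ (∑ a, z a) ≤ Γ ∧ x = ∑ a, w a * z a}

variable {w Γ}

lemma pairValues_subset_lpValues (hΓ : 0 ≤ Γ) : pairValues w Γ ⊆ lpValues w Γ := by
  classical
  rintro x ⟨S, a₀, hS, ha₀, rfl⟩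
  have hfract : Γ - ⌊Γ⌋₊ ∈ Set.Icc (0 : ℝ) 1 :=
    ⟨sub_nonneg.2 (Nat.floor_le hΓ), by linarith [Nat.lt_floor_add_one Γ]⟩
  refine ⟨fun a => (if a ∈ S then 1 else 0) + if a = a₀ then Γ - ⌊Γ⌋₊ else 0,
    fun a => ?_, ?_, ?_⟩
  · by_cases haS : a ∈ S
    · simp [haS, ne_of_mem_of_not_mem haS ha₀]
    · rcases eq_or_ne a a₀ with rfl | h
      · simpa [haS] using hfract
      · simp [haS, h]
  · simp [sum_add_distrib, hS]
  · simp [mul_add, sum_add_distrib, mul_comm]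

lemma sum_mul_le_of_threshold {S : Finset ι} {a₀ : ι} (hS : ∀ a ∈ S, w a₀ ≤ w a)
    (hnotS : ∀ b ∉ S, w b ≤ w a₀) (hw : 0 ≤ w a₀) {z : ι → ℝ}
    (hz : ∀ a, z a ∈ Set.Icc (0 : ℝ) 1) (hsum : ∑ a, z a ≤ Γ) :
    ∑ a, w a * z a ≤ ∑ a ∈ S, w a + (Γ - S.card) * w a₀ := by
  classical
  have hterm : ∀ a, (w a - w a₀) * z a ≤ if a ∈ S then w a - w a₀ else 0 := fun a => by
    split_ifs with ha
    · exact mul_le_of_le_one_right (sub_nonneg.2 (hS a ha)) (hz a).2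
    · exact mul_nonpos_of_nonpos_of_nonneg (sub_nonpos.2 (hnotS a ha)) (hz a).1
  calc ∑ a, w a * z a = ∑ a, (w a - w a₀) * z a + w a₀ * ∑ a, z a := by
        rw [mul_sum, ← sum_add_distrib]
        exact sum_congr rfl fun a _ => by ring
    _ ≤ ∑ a ∈ S, (w a - w a₀) + w a₀ * Γ := by
        gcongr
        simpa only [sum_ite_mem, univ_inter] using sum_le_sum fun a (_ : a ∈ univ) => hterm a
    _ = ∑ a ∈ S, w a + (Γ - S.card) * w a₀ := by
        rw [sum_sub_distrib, sum_const, nsmul_eq_mul]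
        ring

variable (w) in
lemma exists_card_eq_top_and_next {k : ℕ} (hk : k + 1 ≤ Fintype.card ι) :
    ∃ (S : Finset ι) (a₀ : ι), S.card = k ∧ a₀ ∉ S ∧ (∀ a ∈ S, w a₀ ≤ w a) ∧
      ∀ b ∉ S, w b ≤ w a₀ := by
  classical
  obtain ⟨S, hSmem, hSmax⟩ := exists_max_image (univ.powersetCard k) (fun S => ∑ a ∈ S, w a)
    (powersetCard_nonempty.2 (by simp only [card_univ]; omega))
  have hS : S.card = k := (mem_powersetCard.1 hSmem).2
  obtain ⟨a₀, ha₀mem, ha₀max⟩ := exists_max_image (univ \ S) w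
    (by rw [← card_pos, card_univ_sdiff, hS]; omega)
  have ha₀ : a₀ ∉ S := (mem_sdiff.1 ha₀mem).2
  refine ⟨S, a₀, hS, ha₀, fun a ha => ?_, fun b hb => ha₀max b (by simpa using hb)⟩
  -- exchange `a` for `a₀`: the resulting `k`-set has no larger sum
  have ha₀' : a₀ ∉ S.erase a := fun h => ha₀ (mem_of_mem_erase h)
  have hswap : insert a₀ (S.erase a) ∈ univ.powersetCard k := by
    have : 0 < S.card := card_pos.2 ⟨a, ha⟩
    rw [mem_powersetCard, card_insert_of_notMem ha₀', card_erase_of_mem ha]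
    exact ⟨subset_univ _, by omega⟩
  have := hSmax _ hswap
  rw [sum_insert ha₀', ← add_sum_erase S w ha] at this
  linarith

theorem sSup_pairValues_eq_sSup_lpValues (hw : ∀ a, 0 ≤ w a) (hΓ : 0 ≤ Γ)
    (hk : ⌊Γ⌋₊ + 1 ≤ Fintype.card ι) : sSup (pairValues w Γ) = sSup (lpValues w Γ) := by
  obtain ⟨S, a₀, hS, ha₀, hSle, hleS⟩ := exists_card_eq_top_and_next w hk
  have hv : ∑ a ∈ S, w a + (Γ - ⌊Γ⌋₊) * w a₀ ∈ pairValues w Γ := ⟨S, a₀, hS, ha₀, rfl⟩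
  have hub : ∑ a ∈ S, w a + (Γ - ⌊Γ⌋₊) * w a₀ ∈ upperBounds (lpValues w Γ) := by
    rintro x ⟨z, hz, hsum, rfl⟩
    simpa [hS] using sum_mul_le_of_threshold hSle hleS (hw a₀) hz hsum
  have hsub := pairValues_subset_lpValues (w := w) hΓ
  rw [IsGreatest.csSup_eq ⟨hv, fun x hx => hub (hsub hx)⟩, IsGreatest.csSup_eq ⟨hsub hv, hub⟩]

end ProtectionTerm

theorem stmt2_general {ι : Type*} [Fintype ι] (θ : ι → ℝ)
    (Γ : ℝ) (hΓ : 0 ≤ Γ)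
    (hfloor : Nat.floor Γ + 1 ≤ Fintype.card ι) :
    protB Γ θ = sSup {x : ℝ | ∃ z : ι → ℝ,
      (∀ a, z a ∈ Set.Icc (0 : ℝ) 1) ∧ (∑ a, z a) ≤ Γ ∧
      x = ∑ a, phat θ a * z a} :=
  ProtectionTerm.sSup_pairValues_eq_sSup_lpValues (phat_nonneg θ) hΓ hfloor

/-- **LP characterization of the protection term** (Lemma in Appendix B): `B(Γ, θ)`
equals the optimal value of the linear program
`max Σ_a p̂_a·z_a` subject to `z : A → [0,1]` and `Σ_a z_a ≤ Γ`. -/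
theorem stmt2 {ι : Type*} [Fintype ι] [Nonempty ι] (θ : ι → ℝ)
    (hθ : ∀ a, θ a ∈ Set.Icc (0 : ℝ) 1) (Γ : ℝ) (hΓ : 0 ≤ Γ)
    (hfloor : Nat.floor Γ + 1 ≤ Fintype.card ι) :
    protB Γ θ = sSup {x : ℝ | ∃ z : ι → ℝ,
      (∀ a, z a ∈ Set.Icc (0 : ℝ) 1) ∧ (∑ a, z a) ≤ Γ ∧
      x = ∑ a, phat θ a * z a} :=
  stmt2_general θ Γ hΓ hfloor
end

section
/- Let n = |K|·T_s ≥ 1, and let λ, m₂, U, γ, q be nonnegative reals with λ > 0 and λ < n·γ·q. Consider a queue process with Q(0) = 0 and Q(t+1) = (Q(t) + a(t) − μ(t))^+, where for each t the random variables a(t) ≥ 0 and μ(t) ≥ 0 are independent of each other and of (Q(0), …, Q(t)), and satisfy E[a(t)] = λ, E[a(t)²] = m₂ < ∞, E[μ(t)] ≥ n·γ·q, and E[μ(t)²] ≤ T_s·U + T_s²·U². Then the time-averaged expected backlog satisfies limsup_{T→∞} (1/T)·Σ_{t=0}^{T−1} E[Q(t)] ≤ (m₂ + T_s²·U² + T_s·U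 − 2·λ·n·γ·q) / (2·(n·γ·q − λ)); equivalently, the average queueing delay W = limsup_{T→∞} (1/(λT))·Σ_{t=0}^{T−1} E[Q(t)] satisfies W ≤ (m₂ + T_s²·U² + T_s·U − 2·λ·n·γ·q) / (2·λ·(n·γ·q − λ)). -/
/-!
Quadratic Lyapunov drift. Since `((x)⁺)² ≤ x²` and `Q(t)` is independent of `(a(t), μ(t))`,
`E[Q(t+1)²] ≤ E[Q(t)²] + E[(a(t) − μ(t))²] + 2 E[Q(t)] (λ − E[μ(t)])
  ≤ E[Q(t)²] + B − 2 (nγq − λ) E[Q(t)]` with `B = m₂ + T_s²U² + T_sU − 2λnγq`.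
Telescoping from `Q(0) = 0` and dropping `E[Q(T)²] ≥ 0` gives
`2 (nγq − λ) Σ_{t<T} E[Q(t)] ≤ T B`, a bound on every time average and hence on the limsup.
-/

open Finset MeasureTheory Filter ProbabilityTheory

section Moments

variable {Ω : Type*} [MeasurableSpace Ω] {P : Measure Ω} {X Y : Ω → ℝ}

lemma integral_max_zero_sq_le (hX : MemLp X 2 P) :
    ∫ ω, max (X ω) 0 ^ 2 ∂P ≤ ∫ ω, X ω ^ 2 ∂P :=
  integral_mono hX.pos_part.integrable_sq hX.integrable_sq fun ω => by
    rcases le_total (X ω) 0 with h | h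
    · simp [max_eq_right h, sq_nonneg]
    · rw [max_eq_left h]

lemma ProbabilityTheory.IndepFun.integral_add_sq (hX : MemLp X 2 P) (hY : MemLp Y 2 P)
    (hXY : IndepFun X Y P) :
    ∫ ω, (X ω + Y ω) ^ 2 ∂P =
      ∫ ω, X ω ^ 2 ∂P + ∫ ω, Y ω ^ 2 ∂P + 2 * ((∫ ω, X ω ∂P) * ∫ ω, Y ω ∂P) := by
  have hsq : Integrable (fun ω => X ω ^ 2 + Y ω ^ 2) P := hX.integrable_sq.add hY.integrable_sq
  have hmul : Integrable (fun ω => 2 * (X ω * Y ω)) P := (hX.integrable_mul hY).const_mul 2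
  calc ∫ ω, (X ω + Y ω) ^ 2 ∂P = ∫ ω, (X ω ^ 2 + Y ω ^ 2 + 2 * (X ω * Y ω)) ∂P := by
        congr 1; funext ω; ring
    _ = _ := by
      rw [integral_add hsq hmul, integral_add hX.integrable_sq hY.integrable_sq,
        integral_const_mul, hXY.integral_fun_mul_eq_mul_integral hX.1 hY.1]

lemma ProbabilityTheory.IndepFun.integral_sub_sq (hX : MemLp X 2 P) (hY : MemLp Y 2 P)
    (hXY : IndepFun X Y P) :
    ∫ ω, (X ω - Y ω) ^ 2 ∂P =
      ∫ ω, X ω ^ 2 ∂P + ∫ ω, Y ω ^ 2 ∂P - 2 * ((∫ ω, X ω ∂P) * ∫ ω, Y ω ∂P) := by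
  have h := (hXY.comp measurable_id measurable_neg).integral_add_sq hX hY.neg
  simp only [Pi.neg_apply, neg_sq, integral_neg, ← sub_eq_add_neg] at h
  rw [h]
  ring

end Moments

lemma lindley_drift_le {Ω : Type*} [MeasurableSpace Ω] {P : Measure Ω} [IsFiniteMeasure P]
    {X A M : Ω → ℝ} {c s : ℝ} (hX : MemLp X 2 P) (hA : MemLp A 2 P) (hM : MemLp M 2 P)
    (hXAM : IndepFun X (A - M) P) (hAM : IndepFun A M P)
    (hX0 : 0 ≤ ∫ ω, X ω ∂P) (hA0 : 0 ≤ ∫ ω, A ω ∂P)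
    (hMc : c ≤ ∫ ω, M ω ∂P) (hMs : ∫ ω, M ω ^ 2 ∂P ≤ s) :
    ∫ ω, max (X ω + A ω - M ω) 0 ^ 2 ∂P + 2 * (c - ∫ ω, A ω ∂P) * ∫ ω, X ω ∂P ≤
      ∫ ω, X ω ^ 2 ∂P + (∫ ω, A ω ^ 2 ∂P + s - 2 * (∫ ω, A ω ∂P) * c) := by
  have hpos := integral_max_zero_sq_le ((hX.add hA).sub hM)
  have hsq := hXAM.integral_add_sq hX (hA.sub hM)
  simp only [Pi.sub_apply, Pi.add_apply, ← add_sub_assoc] at hpos hsq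
  rw [integral_sub (hA.integrable one_le_two) (hM.integrable one_le_two),
    hAM.integral_sub_sq hA hM] at hsq
  nlinarith [mul_le_mul_of_nonneg_left hMc hX0, mul_le_mul_of_nonneg_left hMc hA0]

section Queue

variable {Ω : Type*} {a m Q : ℕ → Ω → ℝ}

lemma queue_nonneg (hQ0 : ∀ ω, Q 0 ω = 0)
    (hQrec : ∀ t ω, Q (t + 1) ω = max (Q t ω + a t ω - m t ω) 0) : ∀ t ω, 0 ≤ Q t ω
  | 0, ω => (hQ0 ω).ge
  | t + 1, ω => (hQrec t ω).symm ▸ le_max_right _ _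

variable [MeasurableSpace Ω] {P : Measure Ω}

lemma queue_memLp (hQ0 : ∀ ω, Q 0 ω = 0)
    (hQrec : ∀ t ω, Q (t + 1) ω = max (Q t ω + a t ω - m t ω) 0)
    (ha : ∀ t, MemLp (a t) 2 P) (hm : ∀ t, MemLp (m t) 2 P) : ∀ t, MemLp (Q t) 2 P
  | 0 => (funext hQ0 : Q 0 = 0) ▸ MemLp.zero
  | t + 1 => (funext (hQrec t)).symm ▸
      (((queue_memLp hQ0 hQrec ha hm t).add (ha t)).sub (hm t)).pos_part

end Queue

lemma sum_range_le_of_drift {V x : ℕ → ℝ} {ε B : ℝ} (hε : 0 < ε) (hV0 : V 0 = 0)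
    (hV : ∀ t, 0 ≤ V t) (hdrift : ∀ t, V (t + 1) + ε * x t ≤ V t + B) (T : ℕ) :
    ∑ t ∈ range T, x t ≤ T * (B / ε) := by
  rw [mul_div_assoc', le_div_iff₀ hε]
  calc (∑ t ∈ range T, x t) * ε = ∑ t ∈ range T, ε * x t := by rw [sum_mul]; simp_rw [mul_comm]
    _ ≤ ∑ t ∈ range T, (B - (V (t + 1) - V t)) := sum_le_sum fun t _ => by linarith [hdrift t]
    _ = T * B - (V T - V 0) := by rw [sum_sub_distrib, sum_range_sub]; simp
    _ ≤ T * B := by linarith [hV T]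

lemma limsup_one_div_mul_sum_range_le {x : ℕ → ℝ} {κ C : ℝ} (hκ : 0 < κ) (hx : ∀ t, 0 ≤ x t)
    (h : ∀ T : ℕ, ∑ t ∈ range T, x t ≤ T * C) :
    limsup (fun T : ℕ => 1 / (κ * T) * ∑ t ∈ range T, x t) atTop ≤ C / κ := by
  refine limsup_le_of_le (isCoboundedUnder_le_of_le atTop (x := 0) fun T => ?_)
    (eventually_atTop.2 ⟨1, fun T hT => ?_⟩)
  · exact mul_nonneg (by positivity) (sum_nonneg fun t _ => hx t)
  · have hT : (0 : ℝ) < T := by exact_mod_cast hT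
    rw [one_div_mul_eq_div, div_le_div_iff₀ (by positivity) hκ]
    nlinarith [h T]

theorem stmt8_general {Ω : Type*} [MeasurableSpace Ω] (P : Measure Ω) [IsProbabilityMeasure P]
    (Kc Ts : ℕ)
    (lam m2 U γ q : ℝ) (hlam : 0 < lam)
    (hstab : lam < ((Kc * Ts : ℕ) : ℝ) * γ * q)
    (a m : ℕ → Ω → ℝ) (Q : ℕ → Ω → ℝ)
    (hQ0 : ∀ ω, Q 0 ω = 0)
    (hQrec : ∀ t ω, Q (t + 1) ω = max (Q t ω + a t ω - m t ω) 0)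
    (hameas : ∀ t, Measurable (a t)) (hmmeas : ∀ t, Measurable (m t))
    (haint : ∀ t, Integrable (fun ω => (a t ω) ^ 2) P)
    (hmint : ∀ t, Integrable (fun ω => (m t ω) ^ 2) P)
    (hamean : ∀ t, (∫ ω, a t ω ∂P) = lam)
    (ham2 : ∀ t, (∫ ω, (a t ω) ^ 2 ∂P) = m2)
    (hmmean : ∀ t, ((Kc * Ts : ℕ) : ℝ) * γ * q ≤ ∫ ω, m t ω ∂P)
    (hmm2 : ∀ t, (∫ ω, (m t ω) ^ 2 ∂P) ≤ (Ts : ℝ) * U + (Ts : ℝ) ^ 2 * U ^ 2)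
    (hindep1 : ∀ t, ProbabilityTheory.IndepFun (a t) (m t) P)
    (hindep2 : ∀ t, ProbabilityTheory.IndepFun
      (fun ω => fun s : Fin (t + 1) => Q s ω) (fun ω => (a t ω, m t ω)) P) :
    (Filter.atTop.limsup
        (fun T : ℕ => (1 / (T : ℝ)) * ∑ t ∈ Finset.range T, ∫ ω, Q t ω ∂P) ≤
      (m2 + (Ts : ℝ) ^ 2 * U ^ 2 + (Ts : ℝ) * U -
          2 * lam * (((Kc * Ts : ℕ) : ℝ) * γ * q)) /
        (2 * (((Kc * Ts : ℕ) : ℝ) * γ * q - lam))) ∧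
    (Filter.atTop.limsup
        (fun T : ℕ => (1 / (lam * (T : ℝ))) * ∑ t ∈ Finset.range T, ∫ ω, Q t ω ∂P) ≤
      (m2 + (Ts : ℝ) ^ 2 * U ^ 2 + (Ts : ℝ) * U -
          2 * lam * (((Kc * Ts : ℕ) : ℝ) * γ * q)) /
        (2 * lam * (((Kc * Ts : ℕ) : ℝ) * γ * q - lam))) := by
  set c : ℝ := ((Kc * Ts : ℕ) : ℝ) * γ * q
  have haL2 t : MemLp (a t) 2 P :=
    (memLp_two_iff_integrable_sq (hameas t).aestronglyMeasurable).2 (haint t)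
  have hmL2 t : MemLp (m t) 2 P :=
    (memLp_two_iff_integrable_sq (hmmeas t).aestronglyMeasurable).2 (hmint t)
  have hQL2 := queue_memLp hQ0 hQrec haL2 hmL2
  have hQ t : 0 ≤ ∫ ω, Q t ω ∂P := integral_nonneg (queue_nonneg hQ0 hQrec t)
  have hdrift t : ∫ ω, Q (t + 1) ω ^ 2 ∂P + 2 * (c - lam) * ∫ ω, Q t ω ∂P ≤
      ∫ ω, Q t ω ^ 2 ∂P + (m2 + (Ts : ℝ) ^ 2 * U ^ 2 + Ts * U - 2 * lam * c) := by
    have hQam : IndepFun (Q t) (a t - m t) P :=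
      (hindep2 t).comp (measurable_pi_apply (Fin.last t))
        (measurable_fst.sub measurable_snd)
    have h := lindley_drift_le (hQL2 t) (haL2 t) (hmL2 t) hQam (hindep1 t)
      (hQ t) (hamean t ▸ hlam.le) (hmmean t) (hmm2 t)
    simp only [hamean t, ham2 t, ← hQrec] at h
    linarith
  have hsum := sum_range_le_of_drift (by linarith) (by simp [hQ0])
    (fun T => integral_nonneg fun ω => sq_nonneg (Q T ω)) hdrift
  constructor
  · simpa using limsup_one_div_mul_sum_range_le one_pos hQ hsum
  · simpa [div_div, mul_comm, mul_assoc, mul_left_comm] using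
      limsup_one_div_mul_sum_range_le hlam hQ hsum

/-- **Time-averaged backlog and delay bound** (Theorem 8). For the queue
`Q(t+1) = (Q(t) + a(t) − μ(t))⁺`, `Q(0) = 0`, with per-frame arrivals of mean
`λ` and second moment `m₂`, per-frame services independent of each other and
of the history, of mean at least `n·γ·q` (`n = |K|·T_s`) and second moment at
most `T_s·U + T_s²·U²`, and `λ < n·γ·q`: the time-averaged expected backlog is
at most `(m₂ + T_s²U² + T_sU − 2λnγq)/(2(nγq − λ))`, and the average delay
`W = limsup (1/(λT))·Σ E[Q(t)]` is at most
`(m₂ + T_s²U² + T_sU − 2λnγq)/(2λ(nγq − λ))`. -/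
theorem stmt8 {Ω : Type*} [MeasurableSpace Ω] (P : Measure Ω) [IsProbabilityMeasure P]
    (Kc Ts : ℕ) (hn : 1 ≤ Kc * Ts)
    (lam m2 U γ q : ℝ) (hlam : 0 < lam) (hm2 : 0 ≤ m2) (hU : 0 ≤ U)
    (hγ : 0 ≤ γ) (hq : 0 ≤ q)
    (hstab : lam < ((Kc * Ts : ℕ) : ℝ) * γ * q)
    (a m : ℕ → Ω → ℝ) (Q : ℕ → Ω → ℝ)
    (hQ0 : ∀ ω, Q 0 ω = 0)
    (hQrec : ∀ t ω, Q (t + 1) ω = max (Q t ω + a t ω - m t ω) 0)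
    (hameas : ∀ t, Measurable (a t)) (hmmeas : ∀ t, Measurable (m t))
    (hapos : ∀ t ω, 0 ≤ a t ω) (hmpos : ∀ t ω, 0 ≤ m t ω)
    (haint : ∀ t, Integrable (fun ω => (a t ω) ^ 2) P)
    (hmint : ∀ t, Integrable (fun ω => (m t ω) ^ 2) P)
    (hamean : ∀ t, (∫ ω, a t ω ∂P) = lam)
    (ham2 : ∀ t, (∫ ω, (a t ω) ^ 2 ∂P) = m2)
    (hmmean : ∀ t, ((Kc * Ts : ℕ) : ℝ) * γ * q ≤ ∫ ω, m t ω ∂P)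
    (hmm2 : ∀ t, (∫ ω, (m t ω) ^ 2 ∂P) ≤ (Ts : ℝ) * U + (Ts : ℝ) ^ 2 * U ^ 2)
    (hindep1 : ∀ t, ProbabilityTheory.IndepFun (a t) (m t) P)
    (hindep2 : ∀ t, ProbabilityTheory.IndepFun
      (fun ω => fun s : Fin (t + 1) => Q s ω) (fun ω => (a t ω, m t ω)) P) :
    (Filter.atTop.limsup
        (fun T : ℕ => (1 / (T : ℝ)) * ∑ t ∈ Finset.range T, ∫ ω, Q t ω ∂P) ≤
      (m2 + (Ts : ℝ) ^ 2 * U ^ 2 + (Ts : ℝ) * U -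
          2 * lam * (((Kc * Ts : ℕ) : ℝ) * γ * q)) /
        (2 * (((Kc * Ts : ℕ) : ℝ) * γ * q - lam))) ∧
    (Filter.atTop.limsup
        (fun T : ℕ => (1 / (lam * (T : ℝ))) * ∑ t ∈ Finset.range T, ∫ ω, Q t ω ∂P) ≤
      (m2 + (Ts : ℝ) ^ 2 * U ^ 2 + (Ts : ℝ) * U -
          2 * lam * (((Kc * Ts : ℕ) : ℝ) * γ * q)) /
        (2 * lam * (((Kc * Ts : ℕ) : ℝ) * γ * q - lam))) :=
  stmt8_general P Kc Ts lam m2 U γ q hlam hstab a m Q hQ0 hQrec hameas hmmeas haint hmint hamean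
    ham2 hmmean hmm2 hindep1 hindep2
end

section
/- Let f : ℝⁿ → ℝ ∪ {+∞} be proper, convex, and lower semicontinuous, let A be a real m×n matrix and b ∈ ℝᵐ. Suppose there exist x̄ ∈ ℝⁿ and ζ > 0 with f(x̄) < +∞ and A·x̄ ≤ b − ζ·1 componentwise. Then strong duality holds: inf{ f(x) : x ∈ ℝⁿ, A·x ≤ b } = sup{ −⟨b, λ⟩ − f*(−Aᵀλ) : λ ∈ ℝᵐ, λ ≥ 0 }, where f*(y) = sup_{x∈ℝⁿ} ( ⟨x, y⟩ − f(x) ) is the Fenchel conjugate of f. -/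
/-!
Weak duality is the Fenchel–Young inequality combined with `l ⬝ᵥ A *ᵥ x ≤ l ⬝ᵥ b` for `l ≥ 0`.
For the converse, take a real `c` below the primal value and separate `(0, c)` from the convex
set `S = {(u, t) | ∃ x, A *ᵥ x ≤ b + u ∧ f x ≤ t}`. Since `S` is an upper set, the separating
functional `(u, t) ↦ u ⬝ᵥ μ + t * s` has `μ ≤ 0` and `s ≤ 0`; the Slater point puts some `(0, t₀)`
in the interior of `S`, which forces `s ≠ 0`. Then `l = s⁻¹ • μ ≥ 0` satisfies
`c ≤ (A *ᵥ x - b) ⬝ᵥ l + f x` for every `x`, so `c` is at most the dual objective at `l`.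
-/

open Matrix

/-- Fenchel conjugate of an `ℝ ∪ {+∞}`-valued function on `ℝⁿ`:
`f*(y) = sup_x (⟨x, y⟩ − f(x))`. -/
noncomputable def fenchelConj {n : ℕ} (f : (Fin n → ℝ) → EReal) (y : Fin n → ℝ) : EReal :=
  sSup {v : EReal | ∃ x : Fin n → ℝ, v = ((x ⬝ᵥ y : ℝ) : EReal) - f x}

theorem StrongDual.apply_lt_of_mem_interior {E : Type*} [AddCommGroup E] [TopologicalSpace E]
    [ContinuousAdd E] [Module ℝ E] [ContinuousSMul ℝ E] {φ : StrongDual ℝ E} (hφ : φ ≠ 0)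
    {S : Set E} {w : E} (hw : w ∈ interior S) {c : ℝ} (hc : ∀ a ∈ S, φ a ≤ c) : φ w < c := by
  have hsub : φ '' interior S ⊆ interior (Set.Iic c) :=
    interior_maximal (Set.image_subset_iff.2 fun a ha => hc a (interior_subset ha))
      (φ.isOpenMap_of_ne_zero hφ _ isOpen_interior)
  rw [interior_Iic] at hsub
  exact hsub ⟨w, hw, rfl⟩

theorem LinearMap.apply_nonpos_of_isUpperSet {E : Type*} [AddCommGroup E] [PartialOrder E]
    [IsOrderedAddMonoid E] [Module ℝ E] [PosSMulMono ℝ E] (φ : E →ₗ[ℝ] ℝ) {S : Set E}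
    (hS : IsUpperSet S) {w : E} (hw : w ∈ S) {C : ℝ} (hC : ∀ a ∈ S, φ a ≤ C) {d : E}
    (hd : 0 ≤ d) : φ d ≤ 0 := by
  by_contra! hpos
  set t := (C - φ w + 1) / φ d
  have ht : 0 ≤ t := div_nonneg (by linarith [hC w hw]) hpos.le
  have hmem := hC _ (hS (le_add_of_nonneg_right (smul_nonneg ht hd)) hw)
  rw [map_add, map_smul, smul_eq_mul, div_mul_cancel₀ _ hpos.ne'] at hmem
  linarith

theorem LinearMap.prod_apply_eq_dotProduct_add {κ : Type*} [Fintype κ] [DecidableEq κ]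
    (φ : (κ → ℝ) × ℝ →ₗ[ℝ] ℝ) (u : κ → ℝ) (t : ℝ) :
    φ (u, t) = u ⬝ᵥ (fun i => φ (Pi.single i 1, 0)) + t * φ (0, 1) := by
  have hu : ((u, t) : (κ → ℝ) × ℝ) = ∑ i, u i • (Pi.single i 1, 0) + t • (0, 1) := by
    ext i <;> simp [Prod.fst_sum, Prod.snd_sum, Finset.sum_apply, Pi.single_apply]
  rw [hu, map_add, map_sum]
  simp_rw [map_smul, smul_eq_mul]
  rfl

theorem exists_nonneg_forall_mem_le_dotProduct_add {κ : Type*} [Fintype κ]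
    {S : Set ((κ → ℝ) × ℝ)} (hS : Convex ℝ S) (hup : IsUpperSet S) {t₀ c : ℝ}
    (ht₀ : ((0 : κ → ℝ), t₀) ∈ interior S) (hc : ((0 : κ → ℝ), c) ∉ S) :
    ∃ l : κ → ℝ, 0 ≤ l ∧ ∀ w ∈ S, c ≤ w.1 ⬝ᵥ l + w.2 := by
  classical
  obtain ⟨φ, hφ0, hφ⟩ := geometric_hahn_banach_of_nonempty_interior_point hS
    (fun h => hc (interior_subset h)) ⟨_, ht₀⟩
  set μ : κ → ℝ := fun i => φ (Pi.single i 1, 0)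
  set s := φ (0, 1)
  have hφ_eq (u : κ → ℝ) (t : ℝ) : φ (u, t) = u ⬝ᵥ μ + t * s :=
    LinearMap.prod_apply_eq_dotProduct_add (φ : (κ → ℝ) × ℝ →ₗ[ℝ] ℝ) u t
  have hrec (d : (κ → ℝ) × ℝ) (hd : 0 ≤ d) : φ d ≤ 0 :=
    (φ : (κ → ℝ) × ℝ →ₗ[ℝ] ℝ).apply_nonpos_of_isUpperSet hup (interior_subset ht₀) hφ hd
  have hμ : μ ≤ 0 := fun i => hrec _ (by simp [Prod.le_def, Pi.single_nonneg])
  have hs : s < 0 := by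
    have hlt := StrongDual.apply_lt_of_mem_interior hφ0 ht₀ hφ
    simp only [hφ_eq, zero_dotProduct, zero_add] at hlt
    have hs0 : s ≠ 0 := by
      intro h0
      simp [h0] at hlt
    exact (hrec (0, 1) (by simp [Prod.le_def])).lt_of_ne hs0
  refine ⟨s⁻¹ • μ, smul_nonneg_of_nonpos_of_nonpos (inv_nonpos.2 hs.le) hμ, ?_⟩
  rintro ⟨u, t⟩ hw
  have hle := hφ _ hw
  simp only [hφ_eq, zero_dotProduct, zero_add] at hle
  have : c - t ≤ u ⬝ᵥ μ / s := (le_div_iff_of_neg hs).2 (by linarith)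
  rw [dotProduct_smul, smul_eq_mul, inv_mul_eq_div]
  linarith

section Perturbation

variable {ι κ : Type*} [Fintype ι] (f : (ι → ℝ) → EReal) (A : Matrix κ ι ℝ) (b : κ → ℝ)

def perturbationEpigraph : Set ((κ → ℝ) × ℝ) :=
  {w | ∃ x, A *ᵥ x ≤ b + w.1 ∧ f x ≤ w.2}

theorem isUpperSet_perturbationEpigraph : IsUpperSet (perturbationEpigraph f A b) := by
  rintro ⟨u, t⟩ ⟨u', t'⟩ ⟨hu, ht⟩ ⟨x, hx, hfx⟩
  exact ⟨x, hx.trans (add_le_add_right hu b), hfx.trans (EReal.coe_le_coe_iff.2 ht)⟩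

theorem convex_perturbationEpigraph
    (hconv : ∀ x y : ι → ℝ, ∀ t : ℝ, 0 ≤ t → t ≤ 1 →
      f (t • x + (1 - t) • y) ≤ (t : EReal) * f x + ((1 - t : ℝ) : EReal) * f y) :
    Convex ℝ (perturbationEpigraph f A b) := by
  rintro ⟨u₁, t₁⟩ ⟨x₁, hx₁, hf₁⟩ ⟨u₂, t₂⟩ ⟨x₂, hx₂, hf₂⟩ θ τ hθ hτ hθτ
  obtain rfl : τ = 1 - θ := by linarith
  refine ⟨θ • x₁ + (1 - θ) • x₂, ?_, ?_⟩
  · have hconst : b = θ • b + (1 - θ) • b := by rw [← add_smul, add_sub_cancel, one_smul]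
    rw [mulVec_add, mulVec_smul, mulVec_smul, hconst]
    simp only [Prod.smul_mk, Prod.mk_add_mk]
    calc θ • A *ᵥ x₁ + (1 - θ) • A *ᵥ x₂ ≤ θ • (b + u₁) + (1 - θ) • (b + u₂) :=
          add_le_add (smul_le_smul_of_nonneg_left hx₁ hθ) (smul_le_smul_of_nonneg_left hx₂ hτ)
      _ = θ • b + (1 - θ) • b + (θ • u₁ + (1 - θ) • u₂) := by simp only [smul_add]; abel
  · calc f (θ • x₁ + (1 - θ) • x₂) ≤ (θ : EReal) * f x₁ + ((1 - θ : ℝ) : EReal) * f x₂ :=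
          hconv x₁ x₂ θ hθ (by linarith)
      _ ≤ (θ : EReal) * t₁ + ((1 - θ : ℝ) : EReal) * t₂ :=
          add_le_add (mul_le_mul_of_nonneg_left hf₁ (EReal.coe_nonneg.2 hθ))
            (mul_le_mul_of_nonneg_left hf₂ (EReal.coe_nonneg.2 hτ))
      _ = ((θ • (u₁, t₁) + (1 - θ) • (u₂, t₂)).2 : ℝ) := by
          simp only [Prod.smul_mk, Prod.mk_add_mk, smul_eq_mul, EReal.coe_add, EReal.coe_mul]

theorem mem_interior_perturbationEpigraph [Finite κ] {x : ι → ℝ} {ζ : ℝ} (hζ : 0 < ζ)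
    (hslater : ∀ i, (A *ᵥ x) i ≤ b i - ζ) {t : ℝ} (ht : f x < t) :
    ((0 : κ → ℝ), t) ∈ interior (perturbationEpigraph f A b) := by
  have hopen_fst : IsOpen {w : (κ → ℝ) × ℝ | ∀ i, -ζ < w.1 i} := by
    rw [Set.ofPred_forall]
    exact isOpen_iInter_of_finite fun i =>
      isOpen_lt continuous_const ((continuous_apply i).comp continuous_fst)
  have hopen : IsOpen {w : (κ → ℝ) × ℝ | (∀ i, -ζ < w.1 i) ∧ f x < w.2} :=
    hopen_fst.inter (isOpen_lt continuous_const (continuous_coe_real_ereal.comp continuous_snd))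
  refine interior_maximal ?_ hopen ⟨fun _ => neg_lt_zero.2 hζ, ht⟩
  rintro ⟨u, s⟩ ⟨hu, hs⟩
  exact ⟨x, fun i => by linarith [hslater i, hu i, show (b + u) i = b i + u i from rfl], hs.le⟩

end Perturbation

section FenchelConjugate

variable {n : ℕ} (f : (Fin n → ℝ) → EReal)

theorem le_fenchelConj (x y : Fin n → ℝ) : ((x ⬝ᵥ y : ℝ) : EReal) - f x ≤ fenchelConj f y :=
  le_sSup ⟨x, rfl⟩

theorem sub_fenchelConj_le {x y : Fin n → ℝ} {a : ℝ} (h : a ≤ x ⬝ᵥ y) :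
    (a : EReal) - fenchelConj f y ≤ f x := by
  refine EReal.le_of_forall_lt_iff_le.1 fun z hz => ?_
  calc (a : EReal) - fenchelConj f y ≤ a - ((x ⬝ᵥ y - z : ℝ) : EReal) := by
        refine EReal.sub_le_sub le_rfl ((?_ : _ ≤ _).trans (le_fenchelConj f x y))
        rw [EReal.coe_sub]
        exact EReal.sub_le_sub le_rfl hz.le
    _ ≤ z := by
        rw [← EReal.coe_sub]
        exact EReal.coe_le_coe_iff.2 (by linarith)

theorem fenchelConj_le {y : Fin n → ℝ} {K : ℝ}
    (h : ∀ x (z : ℝ), f x < z → x ⬝ᵥ y ≤ K + z) : fenchelConj f y ≤ K := by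
  refine sSup_le ?_
  rintro _ ⟨x, rfl⟩
  refine EReal.sub_le_of_le_add' ?_
  rw [← EReal.sub_le_iff_le_add (.inl (EReal.coe_ne_bot K)) (.inl (EReal.coe_ne_top K)),
    ← EReal.coe_sub]
  exact EReal.le_of_forall_lt_iff_le.1 fun z hz => EReal.coe_le_coe_iff.2 (by linarith [h x z hz])

end FenchelConjugate

theorem dotProduct_neg_vecMul {ι κ R : Type*} [Fintype ι] [Fintype κ] [CommRing R]
    (A : Matrix κ ι R) (l : κ → R) (x : ι → R) :
    x ⬝ᵥ -(l ᵥ* A) = -(l ⬝ᵥ A *ᵥ x) := by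
  rw [dotProduct_neg, dotProduct_mulVec, dotProduct_comm]

section LagrangeDuality

variable {n : ℕ} {κ : Type*} [Fintype κ] (f : (Fin n → ℝ) → EReal) (A : Matrix κ (Fin n) ℝ)
  (b : κ → ℝ)

theorem dual_le_primal {l : κ → ℝ} (hl : 0 ≤ l) {x : Fin n → ℝ} (hx : A *ᵥ x ≤ b) :
    ((-(b ⬝ᵥ l) : ℝ) : EReal) - fenchelConj f (-(l ᵥ* A)) ≤ f x := by
  refine sub_fenchelConj_le f ?_
  rw [dotProduct_neg_vecMul, dotProduct_comm, neg_le_neg_iff]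
  exact dotProduct_le_dotProduct_of_nonneg_left hx hl

theorem le_dual_of_forall_mem_perturbationEpigraph {l : κ → ℝ} {c : ℝ}
    (hl : ∀ w ∈ perturbationEpigraph f A b, c ≤ w.1 ⬝ᵥ l + w.2) :
    (c : EReal) ≤ ((-(b ⬝ᵥ l) : ℝ) : EReal) - fenchelConj f (-(l ᵥ* A)) := by
  have hconj : fenchelConj f (-(l ᵥ* A)) ≤ ((-(b ⬝ᵥ l) - c : ℝ) : EReal) := by
    refine fenchelConj_le f fun x z hz => ?_
    have hx := hl (A *ᵥ x - b, z) ⟨x, by simp, hz.le⟩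
    rw [sub_dotProduct, dotProduct_comm] at hx
    rw [dotProduct_neg_vecMul]
    linarith
  calc (c : EReal) = ((-(b ⬝ᵥ l) : ℝ) : EReal) - ((-(b ⬝ᵥ l) - c : ℝ) : EReal) := by
        rw [← EReal.coe_sub, sub_sub_cancel]
    _ ≤ _ := EReal.sub_le_sub le_rfl hconj

end LagrangeDuality

theorem stmt15_general (n m : ℕ) (f : (Fin n → ℝ) → EReal)
    (hconv : ∀ x y : Fin n → ℝ, ∀ t : ℝ, 0 ≤ t → t ≤ 1 →
      f (t • x + (1 - t) • y) ≤ (t : EReal) * f x + ((1 - t : ℝ) : EReal) * f y)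
    (A : Matrix (Fin m) (Fin n) ℝ) (b : Fin m → ℝ)
    (xbar : Fin n → ℝ) (ζ : ℝ) (hζ : 0 < ζ) (hxbar_fin : f xbar ≠ ⊤)
    (hslater : ∀ i, A.mulVec xbar i ≤ b i - ζ) :
    sInf {v : EReal | ∃ x : Fin n → ℝ, (∀ i, A.mulVec x i ≤ b i) ∧ v = f x} =
      sSup {v : EReal | ∃ l : Fin m → ℝ, (∀ i, 0 ≤ l i) ∧
        v = ((-(b ⬝ᵥ l) : ℝ) : EReal) - fenchelConj f (-(Matrix.vecMul l A))} := by
  refine le_antisymm (EReal.ge_of_forall_gt_iff_ge.1 fun c hc => ?_) (sSup_le ?_)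
  · obtain ⟨t₀, ht₀, -⟩ := EReal.lt_iff_exists_real_btwn.1 (lt_top_iff_ne_top.2 hxbar_fin)
    have hcS : ((0 : Fin m → ℝ), c) ∉ perturbationEpigraph f A b := by
      rintro ⟨x, hx, hfx⟩
      have hfeas : f x ∈ {v : EReal | ∃ x : Fin n → ℝ, (∀ i, A.mulVec x i ≤ b i) ∧ v = f x} :=
        ⟨x, fun i => by simpa using hx i, rfl⟩
      exact ((sInf_le hfeas).trans hfx).not_gt hc
    obtain ⟨l, hl, hlS⟩ := exists_nonneg_forall_mem_le_dotProduct_add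
      (convex_perturbationEpigraph f A b hconv) (isUpperSet_perturbationEpigraph f A b)
      (mem_interior_perturbationEpigraph f A b hζ hslater ht₀) hcS
    exact le_sSup_of_le ⟨l, hl, rfl⟩ (le_dual_of_forall_mem_perturbationEpigraph f A b hlS)
  · rintro _ ⟨l, hl, rfl⟩
    refine le_sInf ?_
    rintro _ ⟨x, hx, rfl⟩
    exact dual_le_primal f A b hl hx

/-- **Fenchel strong duality for linearly constrained convex programs** (Lemma 15).
If `f : ℝⁿ → ℝ ∪ {+∞}` is proper, convex, and lower semicontinuous and the
Slater condition `A·x̄ ≤ b − ζ·1` holds at a point with `f(x̄) < +∞`, then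
`inf { f(x) : A·x ≤ b } = sup_{λ ≥ 0} ( −⟨b, λ⟩ − f*(−Aᵀλ) )`. -/
theorem stmt15 (n m : ℕ) (f : (Fin n → ℝ) → EReal)
    (hbot : ∀ x, f x ≠ ⊥) (hproper : ∃ x, f x ≠ ⊤)
    (hconv : ∀ x y : Fin n → ℝ, ∀ t : ℝ, 0 ≤ t → t ≤ 1 →
      f (t • x + (1 - t) • y) ≤ (t : EReal) * f x + ((1 - t : ℝ) : EReal) * f y)
    (hlsc : LowerSemicontinuous f)
    (A : Matrix (Fin m) (Fin n) ℝ) (b : Fin m → ℝ)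
    (xbar : Fin n → ℝ) (ζ : ℝ) (hζ : 0 < ζ) (hxbar_fin : f xbar ≠ ⊤)
    (hslater : ∀ i, A.mulVec xbar i ≤ b i - ζ) :
    sInf {v : EReal | ∃ x : Fin n → ℝ, (∀ i, A.mulVec x i ≤ b i) ∧ v = f x} =
      sSup {v : EReal | ∃ l : Fin m → ℝ, (∀ i, 0 ≤ l i) ∧
        v = ((-(b ⬝ᵥ l) : ℝ) : EReal) - fenchelConj f (-(Matrix.vecMul l A))} :=
  stmt15_general n m f hconv A b xbar ζ hζ hxbar_fin hslater
end

section
/- Let f : ℝⁿ → ℝ ∪ {+∞} be proper, convex, and lower semicontinuous, A a real m×n matrix, and b, b̃ ∈ ℝᵐ. Suppose: x* minimizes f over {x : A·x ≤ b} and x̃* minimizes f over {x : A·x ≤ b̃}, both with finite value; there exist ζ > 0 and a point x̄ with f(x̄) < +∞, A·x̄ ≤ b − ζ·1, and A·x̄ ≤ b̃ − ζ·1; and there exist λ*, λ̃* ∈ ℝᵐ with λ*, λ̃* ≥ 0 such that inf_x ( f(x) + ⟨λ*, A·x − b⟩ ) = f(x*) and inf_x ( f(x) + ⟨λ̃*,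 A·x − b̃⟩ ) = f(x̃*). Then |f(x*) − f(x̃*)| ≤ κ · ‖b̃ − b‖_∞, where κ = (1/ζ)·max{ f(x̄) − f(x*), f(x̄) − f(x̃*) }. -/
/-!
Strong duality makes `f(x*)` a lower bound for the Lagrangian `f(x) + ⟨λ*, A·x − b⟩` at every
point `x`. At the Slater point this bounds the total dual mass: `ζ · ∑ λ*ᵢ ≤ f(x̄) − f(x*)`.
At `x̃*`, which violates `A·x ≤ b` by at most `‖b̃ − b‖_∞` in each row, it gives
`f(x*) − f(x̃*) ≤ (∑ λ*ᵢ) · ‖b̃ − b‖_∞`. Exchanging the roles of the two problems gives the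
other half of the absolute value.
-/

open Matrix

theorem toReal_le_of_sInf_add_eq {α : Type*} {f : α → EReal} {g : α → ℝ} {z w : α}
    (hz : f z ≠ ⊤) (hz' : f z ≠ ⊥) (hw : f w ≠ ⊤) (hw' : f w ≠ ⊥)
    (h : sInf {v : EReal | ∃ x, v = f x + (g x : EReal)} = f z) :
    (f z).toReal ≤ (f w).toReal + g w := by
  have hle : f z ≤ f w + (g w : EReal) := h ▸ sInf_le ⟨w, rfl⟩
  rwa [← EReal.coe_toReal hz hz', ← EReal.coe_toReal hw hw', ← EReal.coe_add,
    EReal.coe_le_coe_iff] at hle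

theorem dotProduct_le_sum_mul {κ : Type*} [Fintype κ] {l v : κ → ℝ} {t : ℝ}
    (hl : ∀ i, 0 ≤ l i) (hv : ∀ i, v i ≤ t) : l ⬝ᵥ v ≤ (∑ i, l i) * t := by
  rw [dotProduct, Finset.sum_mul]
  exact Finset.sum_le_sum fun i _ => mul_le_mul_of_nonneg_left (hv i) (hl i)

theorem sub_apply_le_norm_sub {κ : Type*} [Fintype κ] (v w : κ → ℝ) (i : κ) :
    v i - w i ≤ ‖v - w‖ :=
  (le_abs_self _).trans (norm_le_pi_norm (v - w) i)

section Lagrangian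

variable {ι κ : Type*} [Fintype ι] [Fintype κ] (A : Matrix κ ι ℝ) {l c : κ → ℝ}

theorem sum_le_of_slater {F Fbar ζ : ℝ} {xbar : ι → ℝ} (hζ : 0 < ζ) (hl : ∀ i, 0 ≤ l i)
    (hslater : ∀ i, (A *ᵥ xbar) i ≤ c i - ζ) (hF : F ≤ Fbar + l ⬝ᵥ (A *ᵥ xbar - c)) :
    ∑ i, l i ≤ 1 / ζ * (Fbar - F) := by
  have hmass : l ⬝ᵥ (A *ᵥ xbar - c) ≤ (∑ i, l i) * -ζ :=
    dotProduct_le_sum_mul hl fun i => by simp only [Pi.sub_apply]; linarith [hslater i]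
  rw [one_div_mul_eq_div, le_div_iff₀ hζ]
  linarith

theorem toReal_sub_le_of_sInf_add_eq {f : (ι → ℝ) → EReal} (hbot : ∀ x, f x ≠ ⊥)
    {c' : κ → ℝ} {z w xbar : ι → ℝ} {ζ δ : ℝ} (hζ : 0 < ζ) (hδ : 0 ≤ δ) (hl : ∀ i, 0 ≤ l i)
    (hz : f z ≠ ⊤) (hw : f w ≠ ⊤) (hxbar : f xbar ≠ ⊤)
    (hslater : ∀ i, (A *ᵥ xbar) i ≤ c i - ζ) (hw_feas : ∀ i, (A *ᵥ w) i ≤ c' i)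
    (hc : ∀ i, c' i - c i ≤ δ)
    (hdual : sInf {v : EReal | ∃ x, v = f x + ((l ⬝ᵥ (A *ᵥ x - c) : ℝ) : EReal)} = f z) :
    (f z).toReal - (f w).toReal ≤ 1 / ζ * ((f xbar).toReal - (f z).toReal) * δ := by
  have hlagrangian (x : ι → ℝ) (hx : f x ≠ ⊤) :
      (f z).toReal ≤ (f x).toReal + l ⬝ᵥ (A *ᵥ x - c) :=
    toReal_le_of_sInf_add_eq (g := fun x => l ⬝ᵥ (A *ᵥ x - c)) hz (hbot z) hx (hbot x) hdual
  have hmass := sum_le_of_slater A hζ hl hslater (hlagrangian xbar hxbar)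
  have hviolation : l ⬝ᵥ (A *ᵥ w - c) ≤ (∑ i, l i) * δ :=
    dotProduct_le_sum_mul hl fun i => by simp only [Pi.sub_apply]; linarith [hw_feas i, hc i]
  linarith [mul_le_mul_of_nonneg_right hmass hδ, hlagrangian w hw]

end Lagrangian

theorem stmt17_general (n m : ℕ) (f : (Fin n → ℝ) → EReal)
    (hbot : ∀ x, f x ≠ ⊥)
    (A : Matrix (Fin m) (Fin n) ℝ) (b btilde : Fin m → ℝ)
    (xstar : Fin n → ℝ) (hfeas : ∀ i, A.mulVec xstar i ≤ b i)
    (hfin : f xstar ≠ ⊤)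
    (xtstar : Fin n → ℝ) (htfeas : ∀ i, A.mulVec xtstar i ≤ btilde i)
    (htfin : f xtstar ≠ ⊤)
    (xbar : Fin n → ℝ) (ζ : ℝ) (hζ : 0 < ζ) (hxbar_fin : f xbar ≠ ⊤)
    (hslater : ∀ i, A.mulVec xbar i ≤ b i - ζ)
    (htslater : ∀ i, A.mulVec xbar i ≤ btilde i - ζ)
    (lstar : Fin m → ℝ) (hl : ∀ i, 0 ≤ lstar i)
    (hdual : sInf {v : EReal | ∃ x : Fin n → ℝ,
        v = f x + ((lstar ⬝ᵥ (A.mulVec x - b) : ℝ) : EReal)} = f xstar)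
    (ltstar : Fin m → ℝ) (htl : ∀ i, 0 ≤ ltstar i)
    (htdual : sInf {v : EReal | ∃ x : Fin n → ℝ,
        v = f x + ((ltstar ⬝ᵥ (A.mulVec x - btilde) : ℝ) : EReal)} = f xtstar) :
    |(f xstar).toReal - (f xtstar).toReal| ≤
      ((1 / ζ) * max ((f xbar).toReal - (f xstar).toReal)
          ((f xbar).toReal - (f xtstar).toReal)) * ‖btilde - b‖ := by
  have hδ : 0 ≤ ‖btilde - b‖ := norm_nonneg _
  have hstar := toReal_sub_le_of_sInf_add_eq A hbot hζ hδ hl hfin htfin hxbar_fin hslater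
    htfeas (sub_apply_le_norm_sub btilde b) hdual
  have htstar := toReal_sub_le_of_sInf_add_eq A hbot hζ hδ htl htfin hfin hxbar_fin htslater
    hfeas (fun i => norm_sub_rev btilde b ▸ sub_apply_le_norm_sub b btilde i) htdual
  rw [abs_sub_le_iff]
  constructor
  · exact hstar.trans (by gcongr; exact le_max_left _ _)
  · exact htstar.trans (by gcongr; exact le_max_right _ _)

/-- **Perturbation bound for the optimal value under right-hand-side
perturbation** (Theorem 17). If `x*` and `x̃*` minimize the proper convex lsc
function `f` over `{A·x ≤ b}` and `{A·x ≤ b̃}` respectively (both with finite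
value), `x̄` is a common Slater point of margin `ζ` for both right-hand sides,
and `λ*, λ̃* ≥ 0` are optimal dual solutions attaining strong duality, then
`|f(x*) − f(x̃*)| ≤ κ·‖b̃ − b‖_∞` with
`κ = (1/ζ)·max{f(x̄) − f(x*), f(x̄) − f(x̃*)}`. -/
theorem stmt17 (n m : ℕ) (f : (Fin n → ℝ) → EReal)
    (hbot : ∀ x, f x ≠ ⊥) (hproper : ∃ x, f x ≠ ⊤)
    (hconv : ∀ x y : Fin n → ℝ, ∀ t : ℝ, 0 ≤ t → t ≤ 1 →
      f (t • x + (1 - t) • y) ≤ (t : EReal) * f x + ((1 - t : ℝ) : EReal) * f y)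
    (hlsc : LowerSemicontinuous f)
    (A : Matrix (Fin m) (Fin n) ℝ) (b btilde : Fin m → ℝ)
    (xstar : Fin n → ℝ) (hfeas : ∀ i, A.mulVec xstar i ≤ b i)
    (hfin : f xstar ≠ ⊤)
    (hmin : ∀ x : Fin n → ℝ, (∀ i, A.mulVec x i ≤ b i) → f xstar ≤ f x)
    (xtstar : Fin n → ℝ) (htfeas : ∀ i, A.mulVec xtstar i ≤ btilde i)
    (htfin : f xtstar ≠ ⊤)
    (htmin : ∀ x : Fin n → ℝ, (∀ i, A.mulVec x i ≤ btilde i) → f xtstar ≤ f x)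
    (xbar : Fin n → ℝ) (ζ : ℝ) (hζ : 0 < ζ) (hxbar_fin : f xbar ≠ ⊤)
    (hslater : ∀ i, A.mulVec xbar i ≤ b i - ζ)
    (htslater : ∀ i, A.mulVec xbar i ≤ btilde i - ζ)
    (lstar : Fin m → ℝ) (hl : ∀ i, 0 ≤ lstar i)
    (hdual : sInf {v : EReal | ∃ x : Fin n → ℝ,
        v = f x + ((lstar ⬝ᵥ (A.mulVec x - b) : ℝ) : EReal)} = f xstar)
    (ltstar : Fin m → ℝ) (htl : ∀ i, 0 ≤ ltstar i)
    (htdual : sInf {v : EReal | ∃ x : Fin n → ℝ,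
        v = f x + ((ltstar ⬝ᵥ (A.mulVec x - btilde) : ℝ) : EReal)} = f xtstar) :
    |(f xstar).toReal - (f xtstar).toReal| ≤
      ((1 / ζ) * max ((f xbar).toReal - (f xstar).toReal)
          ((f xbar).toReal - (f xtstar).toReal)) * ‖btilde - b‖ :=
  stmt17_general n m f hbot A b btilde xstar hfeas hfin xtstar htfeas htfin xbar ζ hζ hxbar_fin
    hslater htslater lstar hl hdual ltstar htl htdual
end
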